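/- For every y = (y₁, y₂) ∈ ℝ² with y_min < y₁ < y_max and |y₂| ≥ ((b+1)/√b)·s*, the inequality f^(r₀)(y₁, y₂) − ((1/2)y₁² + (b/(2(b+1)))y₂²) ≥ (1/2)(y₁ − y_min)(y_max − y₁) holds. -/

import Mathlib

/-- The condensed energy `f^(r)` associated with the dissipation function `r`
and the hardening parameter `b`. -/
noncomputable def condensed (b : ℝ) (r : ℝ → ℝ) (y : ℝ × ℝ) : ℝ :=
  (1 / 2) * (y.1 ^ 2 + y.2 ^ 2) - (max (|y.2| - r y.1) 0) ^ 2 / (2 * (b + 1))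

/-- The piecewise affine dissipation function `r₀`. -/
noncomputable def r0 (b ymin ymax : ℝ) (t : ℝ) : ℝ :=
  if t ∈ Set.Icc ymin ymax then
    Real.sqrt b * ((ymax - ymin) / 2 - |t - (ymin + ymax) / 2|)
  else 0

theorem stmt_8 (b ymin ymax : ℝ) (hb : 0 < b) (hy : ymin < ymax)
    (y : ℝ × ℝ) (h1 : ymin < y.1) (h2 : y.1 < ymax)
    (h3 : ((b + 1) / Real.sqrt b) * ((ymax - ymin) / 2) ≤ |y.2|) :
    (1 / 2) * (y.1 - ymin) * (ymax - y.1) ≤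
      condensed b (r0 b ymin ymax) y
        - ((1 / 2) * y.1 ^ 2 + (b / (2 * (b + 1))) * y.2 ^ 2) := by
  have hsb : Real.sqrt b ^ 2 = b := Real.sq_sqrt hb.le
  have hsbpos : 0 < Real.sqrt b := Real.sqrt_pos.2 hb
  set s : ℝ := (ymax - ymin) / 2 with hs
  set d : ℝ := y.1 - (ymin + ymax) / 2 with hd
  have hmem : y.1 ∈ Set.Icc ymin ymax := ⟨h1.le, h2.le⟩
  have habs : |d| < s := abs_lt.2 ⟨by rw [hd, hs]; linarith, by rw [hd, hs]; linarith⟩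
  have habs0 : 0 ≤ |d| := abs_nonneg d
  have hspos : 0 < s := lt_of_le_of_lt habs0 habs
  -- √b * |y₂| ≥ (b+1) * s
  have h3' : (b + 1) * s ≤ Real.sqrt b * |y.2| := by
    have := mul_le_mul_of_nonneg_left h3 hsbpos.le
    calc (b + 1) * s = Real.sqrt b * (((b + 1) / Real.sqrt b) * s) := by
          field_simp
      _ ≤ Real.sqrt b * |y.2| := this
  have hrle : Real.sqrt b * (s - |d|) ≤ |y.2| := by
    have h4 : Real.sqrt b * (s - |d|) ≤ Real.sqrt b * s :=
      mul_le_mul_of_nonneg_left (by linarith) hsbpos.le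
    have h5 : Real.sqrt b * s ≤ (b + 1) / Real.sqrt b * s := by
      apply mul_le_mul_of_nonneg_right _ hspos.le
      rw [le_div_iff₀ hsbpos]
      nlinarith
    linarith
  have hcond : condensed b (r0 b ymin ymax) y =
      (1 / 2) * (y.1 ^ 2 + y.2 ^ 2)
        - (|y.2| - Real.sqrt b * (s - |d|)) ^ 2 / (2 * (b + 1)) := by
    rw [condensed, r0, if_pos hmem, ← hs, ← hd, max_eq_left (by linarith)]
  rw [hcond]
  have hd2 : |d| ^ 2 = d ^ 2 := sq_abs d
  have hy2 : |y.2| ^ 2 = y.2 ^ 2 := sq_abs y.2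
  have hfac : (y.1 - ymin) * (ymax - y.1) = s ^ 2 - d ^ 2 := by
    rw [hs, hd]; ring
  have key : 0 ≤ 2 * (s - |d|) * (Real.sqrt b * |y.2| - (b + 1) * s) :=
    mul_nonneg (by linarith) (by linarith)
  have main : (b + 1) * ((y.1 - ymin) * (ymax - y.1)) ≤
      y.2 ^ 2 - (|y.2| - Real.sqrt b * (s - |d|)) ^ 2 := by
    nlinarith [key, hsb, hd2, hy2, hfac, sq_nonneg (s - |d|)]
  have h2b : (0 : ℝ) < 2 * (b + 1) := by linarith
  calc (1 / 2) * (y.1 - ymin) * (ymax - y.1)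
      = ((b + 1) * ((y.1 - ymin) * (ymax - y.1))) / (2 * (b + 1)) := by
        field_simp
    _ ≤ (y.2 ^ 2 - (|y.2| - Real.sqrt b * (s - |d|)) ^ 2) / (2 * (b + 1)) := by
        gcongr
    _ = (1 / 2) * (y.1 ^ 2 + y.2 ^ 2)
        - (|y.2| - Real.sqrt b * (s - |d|)) ^ 2 / (2 * (b + 1))
        - ((1 / 2) * y.1 ^ 2 + (b / (2 * (b + 1))) * y.2 ^ 2) := by
        field_simp; ring
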